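/- Asymptotic dimension is a quasi-isometry invariant: if (X1,d1) and (X2,d2) are quasi-isometric metric spaces, then asdim X1 = asdim X2. -/
import Mathlib


open Metric Set

noncomputable section

/-- The word length of `g` with respect to a symmetrized generating set `S ∪ S⁻¹`. -/
noncomputable def wordLength {G : Type*} [Group G] (S : Set G) (g : G) : ℕ :=
  sInf {n : ℕ | ∃ l : List G, l.length = n ∧ (∀ x ∈ l, x ∈ S ∨ x⁻¹ ∈ S) ∧ l.prod = g}

/-- The word metric on a group with respect to a generating set `S`. -/
noncomputable def wordDist {G : Type*} [Group G] (S : Set G) (a b : G) : ℝ :=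
  (wordLength S (a⁻¹ * b) : ℝ)

/-- `AsdimLE d n` : the space with distance function `d` has asymptotic dimension at most `n`:
for every `D > 0` there are `B ≥ 0` and families `U 0, ..., U n` of subsets covering the space,
all of whose members have diameter at most `B`, and such that distinct members of the same
family are at mutual distance greater than `D`. -/
def AsdimLE {X : Type*} (d : X → X → ℝ) (n : ℕ) : Prop :=
  ∀ D : ℝ, 0 < D → ∃ B : ℝ, 0 ≤ B ∧ ∃ U : Fin (n + 1) → Set (Set X),
    (∀ x : X, ∃ i : Fin (n + 1), ∃ u ∈ U i, x ∈ u) ∧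
    (∀ i : Fin (n + 1), ∀ u ∈ U i, ∀ x ∈ u, ∀ y ∈ u, d x y ≤ B) ∧
    (∀ i : Fin (n + 1), ∀ u ∈ U i, ∀ v ∈ U i, u ≠ v → ∀ x ∈ u, ∀ y ∈ v, D < d x y)

/-- The asymptotic dimension of a space with distance function `d`, in `ℕ∞`. -/
noncomputable def asdimD {X : Type*} (d : X → X → ℝ) : ℕ∞ :=
  ⨅ (n : ℕ) (_ : AsdimLE d n), (n : ℕ∞)

/-- The asymptotic dimension of a pseudometric space. -/
noncomputable def asdim (X : Type*) [PseudoMetricSpace X] : ℕ∞ :=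
  asdimD (fun x y : X => dist x y)


/-- Pull back an asymptotic-dimension bound along a quasi-isometric embedding. -/
lemma asdimLE_pull {X1 X2 : Type*} [PseudoMetricSpace X1] [PseudoMetricSpace X2]
    (f : X1 → X2) (B C : ℝ) (hB : 0 < B) (hC : 1 ≤ C)
    (hqi : ∀ x y : X1, (1 / B) * dist x y - C ≤ dist (f x) (f y) ∧
      dist (f x) (f y) ≤ B * dist x y + C)
    (n : ℕ) (h : AsdimLE (fun x y : X2 => dist x y) n) :
    AsdimLE (fun x y : X1 => dist x y) n := by
  intro D hD
  obtain ⟨B2, hB2, U, hcov, hdiam, hsep⟩ := h (B * D + C)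
    (by nlinarith [mul_pos hB hD])
  refine ⟨B * (B2 + C), by nlinarith, fun i => (fun u => f ⁻¹' u) '' U i, ?_, ?_, ?_⟩
  · intro x
    obtain ⟨i, u, hu, hx⟩ := hcov (f x)
    exact ⟨i, f ⁻¹' u, ⟨u, hu, rfl⟩, hx⟩
  · rintro i v ⟨u, hu, rfl⟩ x hx y hy
    have h1 := hdiam i u hu (f x) hx (f y) hy
    have h2 := (hqi x y).1
    have h3 : (1 / B) * dist x y ≤ B2 + C := by linarith
    have h4 := mul_le_mul_of_nonneg_left h3 hB.le
    have h5 : B * ((1 / B) * dist x y) = dist x y := by field_simp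
    linarith
  · rintro i v ⟨u, hu, rfl⟩ w ⟨u', hu', rfl⟩ hne x hx y hy
    have hne' : u ≠ u' := by rintro rfl; exact hne rfl
    have h1 := hsep i u hu u' hu' hne' (f x) hx (f y) hy
    have h2 := (hqi x y).2
    have h3 : B * D < B * dist x y := by linarith
    exact (mul_lt_mul_iff_right₀ hB).mp h3

/-- Push forward an asymptotic-dimension bound along a quasi-isometry with dense image. -/
lemma asdimLE_push {X1 X2 : Type*} [PseudoMetricSpace X1] [PseudoMetricSpace X2]
    (f : X1 → X2) (B C : ℝ) (hB : 0 < B) (hC : 1 ≤ C)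
    (hqi : ∀ x y : X1, (1 / B) * dist x y - C ≤ dist (f x) (f y) ∧
      dist (f x) (f y) ≤ B * dist x y + C)
    (hdense : ∀ z : X2, ∃ x : X1, dist z (f x) ≤ C)
    (n : ℕ) (h : AsdimLE (fun x y : X1 => dist x y) n) :
    AsdimLE (fun x y : X2 => dist x y) n := by
  intro D hD
  obtain ⟨B1, hB1, U, hcov, hdiam, hsep⟩ := h (B * (D + 3 * C))
    (mul_pos hB (by linarith))
  refine ⟨B * B1 + 3 * C, by nlinarith [mul_nonneg hB.le hB1],
    fun i => (fun u => {z : X2 | ∃ x ∈ u, dist z (f x) ≤ C}) '' U i, ?_, ?_, ?_⟩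
  · intro z
    obtain ⟨x, hx⟩ := hdense z
    obtain ⟨i, u, hu, hxu⟩ := hcov x
    exact ⟨i, _, ⟨u, hu, rfl⟩, x, hxu, hx⟩
  · rintro i v ⟨u, hu, rfl⟩ z ⟨x, hxu, hzx⟩ w ⟨y, hyu, hwy⟩
    have h1 := hdiam i u hu x hxu y hyu
    have h2 := (hqi x y).2
    have h3 : dist z w ≤ dist z (f x) + dist (f x) (f y) + dist (f y) w :=
      dist_triangle4 z (f x) (f y) w
    have h4 : dist (f y) w = dist w (f y) := dist_comm _ _
    have h5 : B * dist x y ≤ B * B1 := mul_le_mul_of_nonneg_left h1 hB.le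
    linarith
  · rintro i v ⟨u, hu, rfl⟩ w ⟨u', hu', rfl⟩ hne z ⟨x, hxu, hzx⟩ y2 ⟨y, hyu, hy2⟩
    have hne' : u ≠ u' := by rintro rfl; exact hne rfl
    have h1 := hsep i u hu u' hu' hne' x hxu y hyu
    have h2 := (hqi x y).1
    have h3 : (1 / B) * (B * (D + 3 * C)) < (1 / B) * dist x y :=
      mul_lt_mul_of_pos_left h1 (one_div_pos.mpr hB)
    have h4 : (1 / B) * (B * (D + 3 * C)) = D + 3 * C := by field_simp
    have h5 : dist (f x) (f y) ≤ dist (f x) z + dist z y2 + dist y2 (f y) :=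
      dist_triangle4 (f x) z y2 (f y)
    have h6 : dist (f x) z = dist z (f x) := dist_comm _ _
    linarith

/-- Asymptotic dimension is a quasi-isometry invariant. -/
theorem stmt2 {X1 X2 : Type*} [PseudoMetricSpace X1] [PseudoMetricSpace X2]
    (f : X1 → X2) (B C : ℝ) (hB : 0 < B) (hC : 1 ≤ C)
    (hqi : ∀ x y : X1, (1 / B) * dist x y - C ≤ dist (f x) (f y) ∧
      dist (f x) (f y) ≤ B * dist x y + C)
    (hdense : ∀ z : X2, ∃ x : X1, dist z (f x) ≤ C) :
    asdim X1 = asdim X2 := by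
  have key : ∀ n : ℕ, AsdimLE (fun x y : X1 => dist x y) n ↔
      AsdimLE (fun x y : X2 => dist x y) n := fun n =>
    ⟨asdimLE_push f B C hB hC hqi hdense n, asdimLE_pull f B C hB hC hqi n⟩
  simp only [asdim, asdimD]
  exact iInf_congr fun n => iInf_congr_Prop (key n) fun _ => rfl
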